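/- Fix τ ∈ (0,1) and x ≤ 0. For ρ > 0, set c(ρ) := (√((1−τ)²/4 + 1/ρ²) + (1−τ)/2)^{−1}, R^{τ}_{ρ}(z) := ∫_{−ρτ}^{ρ(1−τ)} e^{−(2·Re z − ξ)²/2} / (∫_{−∞}^{0} e^{−(t−ξ)²/2} dt) dξ for Re z ≤ 0, and the rescaled 1-point function R̃^{τ}_{ρ}(z) := (c(ρ)/ρ)² · R^{τ}_{ρ}((c(ρ)/ρ)·z). Then for every z ∈ ℂ with Re z = x ≤ 0, lim_{ρ→∞} R̃^{τ}_{ρ}(z) = ∫_{0}^{1} ξ · e^{2xξ} dξ. -/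

import Mathlib

/-!
The denominator of `R^τ_ρ` is the Gaussian tail `E(ξ) = ∫_ξ^∞ e^{-s²/2} ds`. Substituting
`ξ = k u` with `k = ρ / c(ρ) → ∞` turns `R̃^τ_ρ(z)` into the integral over
`u ∈ (-τ c(ρ), (1 - τ) c(ρ)]` of `k⁻¹ e^{2xu - 2x²/k²} r(k u)`, where `r = e^{-ξ²/2} / E` is the
inverse Mills ratio. Gordon's bounds `ξ ≤ r(ξ) ≤ ξ + 1/ξ` give `r(k u) / (k u) → 1`, so the
integrand tends to `u e^{2xu}` for `u > 0` and to `0` for `u ≤ 0`; for `x ≤ 0` and `k ≥ 1` it is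
at most `max (1 / E(1)) (2u)`. As `c(ρ) → 1 / (1 - τ)`, the window tends to `(-τ / (1 - τ), 1]`,
and dominated convergence concludes.
-/

open Filter MeasureTheory Real

noncomputable section

/-- The ratio `c(ρ) = (√((1-τ)²/4 + 1/ρ²) + (1-τ)/2)⁻¹` of the hard-edge mean eigenvalue
spacing to the bulk spacing. -/
def cOf (τ ρ : ℝ) : ℝ := (Real.sqrt ((1 - τ)^2 / 4 + 1 / ρ^2) + (1 - τ) / 2)⁻¹

/-- The one-sided hard edge scaling limit
`R^τ_ρ(z) = ∫_{-ρτ}^{ρ(1-τ)} e^{-(2 Re z - ξ)²/2} / (∫_{-∞}^0 e^{-(t-ξ)²/2} dt) dξ`. -/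
def Rlim1 (ρ τ : ℝ) (z : ℂ) : ℝ :=
  ∫ ξ in (-(ρ*τ))..(ρ*(1-τ)),
    Real.exp (-(2 * z.re - ξ)^2 / 2) /
      ∫ t in Set.Iio (0:ℝ), Real.exp (-(t - ξ)^2 / 2)

/-- The rescaled 1-point function `R̃^τ_ρ(z) = (c(ρ)/ρ)² R^τ_ρ((c(ρ)/ρ) z)`. -/
def Rtilde (τ ρ : ℝ) (z : ℂ) : ℝ :=
  (cOf τ ρ / ρ)^2 * Rlim1 ρ τ (((cOf τ ρ / ρ : ℝ) : ℂ) * z)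

open Set Topology

def gaussTail (ξ : ℝ) : ℝ := ∫ s in Ioi ξ, exp (-s ^ 2 / 2)

/-- `φ / (1 - Φ)` for the standard Gaussian: the normalising constants `√(2π)` cancel. -/
def invMillsRatio (ξ : ℝ) : ℝ := exp (-ξ ^ 2 / 2) / gaussTail ξ

/-- The integrand of `Rtilde` after the substitution `ξ = k u`, with `k = ρ / c(ρ)`. -/
def hardEdgeIntegrand (k x u : ℝ) : ℝ :=
  k⁻¹ * (exp (-(2 * (x / k) - k * u) ^ 2 / 2) / gaussTail (k * u))

lemma integrable_exp_neg_sq_div_two : Integrable fun s : ℝ => exp (-s ^ 2 / 2) := by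
  simpa [neg_div, div_eq_inv_mul] using integrable_exp_neg_mul_sq (b := 2⁻¹) (by norm_num)

lemma gaussTail_pos (ξ : ℝ) : 0 < gaussTail ξ :=
  have : NeZero (volume.restrict (Ioi ξ)) := ⟨by simp⟩
  integral_exp_pos integrable_exp_neg_sq_div_two.integrableOn

lemma gaussTail_antitone : Antitone gaussTail := fun _ _ hab =>
  setIntegral_mono_set integrable_exp_neg_sq_div_two.integrableOn
    (.of_forall fun _ => (exp_pos _).le) (Ioi_subset_Ioi hab).eventuallyLE

lemma measurable_gaussTail : Measurable gaussTail := gaussTail_antitone.measurable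

lemma setIntegral_Iio_exp_neg_sub_sq (ξ : ℝ) :
    ∫ t in Iio 0, exp (-(t - ξ) ^ 2 / 2) = gaussTail ξ := by
  have h := (Measure.measurePreserving_sub_left volume ξ).setIntegral_preimage_emb
    (Homeomorph.subLeft ξ).measurableEmbedding (fun s => exp (-s ^ 2 / 2)) (Ioi ξ)
  have hpre : (fun t => ξ - t) ⁻¹' Ioi ξ = Iio 0 := by ext t; simp
  rw [hpre] at h
  rw [gaussTail, ← h]
  refine setIntegral_congr_fun measurableSet_Iio fun t _ => ?_
  ring_nf

lemma tendsto_exp_neg_sq_div_two_atTop :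
    Tendsto (fun s : ℝ => exp (-s ^ 2 / 2)) atTop (𝓝 0) := by
  refine tendsto_exp_atBot.comp ?_
  simpa [neg_div] using (tendsto_pow_atTop two_ne_zero).atTop_div_const (two_pos : (0 : ℝ) < 2)

lemma hasDerivAt_exp_neg_sq_div_two (s : ℝ) :
    HasDerivAt (fun s : ℝ => exp (-s ^ 2 / 2)) (-s * exp (-s ^ 2 / 2)) s := by
  have : HasDerivAt (fun s : ℝ => -s ^ 2 / 2) (-s) s :=
    ((hasDerivAt_pow 2 s).neg.div_const 2).congr_deriv (by push_cast; ring)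
  simpa [mul_comm] using this.exp

lemma exp_neg_sq_div_two_le_one (s : ℝ) : exp (-s ^ 2 / 2) ≤ 1 :=
  exp_le_one_iff.2 (div_nonpos_of_nonpos_of_nonneg (neg_nonpos.2 (sq_nonneg s)) zero_le_two)

lemma gaussTail_le_exp_div {ξ : ℝ} (hξ : 0 < ξ) : gaussTail ξ ≤ exp (-ξ ^ 2 / 2) / ξ := by
  have hderiv : ∀ s ∈ Ici ξ, HasDerivAt (fun s : ℝ => -exp (-s ^ 2 / 2)) (s * exp (-s ^ 2 / 2)) s :=
    fun s _ => (hasDerivAt_exp_neg_sq_div_two s).neg.congr_deriv (by ring)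
  have hpos : ∀ s ∈ Ioi ξ, 0 ≤ s * exp (-s ^ 2 / 2) := fun s hs =>
    have : 0 < s := hξ.trans hs; by positivity
  have hlim : Tendsto (fun s : ℝ => -exp (-s ^ 2 / 2)) atTop (𝓝 0) := by
    simpa using tendsto_exp_neg_sq_div_two_atTop.neg
  have hint := integral_Ioi_of_hasDerivAt_of_nonneg' hderiv hpos hlim
  calc gaussTail ξ ≤ ∫ s in Ioi ξ, s * exp (-s ^ 2 / 2) / ξ := by
        refine setIntegral_mono_on integrable_exp_neg_sq_div_two.integrableOn
          ((integrableOn_Ioi_deriv_of_nonneg' hderiv hpos hlim).div_const ξ) measurableSet_Ioi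
          fun s hs => ?_
        rw [le_div_iff₀ hξ, mul_comm]
        exact mul_le_mul_of_nonneg_right hs.le (exp_pos _).le
    _ = exp (-ξ ^ 2 / 2) / ξ := by rw [integral_div, hint]; ring

lemma exp_div_le_mul_gaussTail {ξ : ℝ} (hξ : 0 < ξ) :
    exp (-ξ ^ 2 / 2) / ξ ≤ (1 + ξ⁻¹ ^ 2) * gaussTail ξ := by
  have hderiv : ∀ s ∈ Ici ξ, HasDerivAt (fun s : ℝ => -exp (-s ^ 2 / 2) / s)
      ((1 + s⁻¹ ^ 2) * exp (-s ^ 2 / 2)) s := fun s hs => by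
    have hs : s ≠ 0 := (hξ.trans_le hs).ne'
    refine ((hasDerivAt_exp_neg_sq_div_two s).neg.div (hasDerivAt_id s) hs).congr_deriv ?_
    simp only [Pi.neg_apply, id]
    field_simp
    ring
  have hpos : ∀ s ∈ Ioi ξ, 0 ≤ (1 + s⁻¹ ^ 2) * exp (-s ^ 2 / 2) := fun s _ => by positivity
  have hlim : Tendsto (fun s : ℝ => -exp (-s ^ 2 / 2) / s) atTop (𝓝 0) := by
    simpa [div_eq_mul_inv] using tendsto_exp_neg_sq_div_two_atTop.neg.mul tendsto_inv_atTop_zero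
  have hint := integral_Ioi_of_hasDerivAt_of_nonneg' hderiv hpos hlim
  calc exp (-ξ ^ 2 / 2) / ξ = ∫ s in Ioi ξ, (1 + s⁻¹ ^ 2) * exp (-s ^ 2 / 2) := by
        rw [hint]; ring
    _ ≤ ∫ s in Ioi ξ, (1 + ξ⁻¹ ^ 2) * exp (-s ^ 2 / 2) := by
        refine setIntegral_mono_on (integrableOn_Ioi_deriv_of_nonneg' hderiv hpos hlim)
          (integrable_exp_neg_sq_div_two.integrableOn.const_mul _) measurableSet_Ioi
          fun s hs => ?_
        have : 0 < s := hξ.trans hs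
        gcongr
        exact hs.le
    _ = (1 + ξ⁻¹ ^ 2) * gaussTail ξ := integral_const_mul _ _

lemma le_invMillsRatio {ξ : ℝ} (hξ : 0 < ξ) : ξ ≤ invMillsRatio ξ := by
  rw [invMillsRatio, le_div_iff₀ (gaussTail_pos ξ), mul_comm, ← le_div_iff₀ hξ]
  exact gaussTail_le_exp_div hξ

lemma invMillsRatio_le {ξ : ℝ} (hξ : 0 < ξ) : invMillsRatio ξ ≤ ξ + ξ⁻¹ := by
  have h := exp_div_le_mul_gaussTail hξ
  rw [div_le_iff₀ hξ] at h
  rw [invMillsRatio, div_le_iff₀ (gaussTail_pos ξ)]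
  convert h using 1
  field_simp

lemma tendsto_invMillsRatio_div_atTop :
    Tendsto (fun ξ => invMillsRatio ξ / ξ) atTop (𝓝 1) := by
  have hupper : Tendsto (fun ξ : ℝ => 1 + ξ⁻¹ ^ 2) atTop (𝓝 1) := by
    simpa using (tendsto_inv_atTop_zero.pow 2).const_add (1 : ℝ)
  refine tendsto_of_tendsto_of_tendsto_of_le_of_le' tendsto_const_nhds hupper ?_ ?_ <;>
    filter_upwards [eventually_gt_atTop 0] with ξ hξ
  · rw [le_div_iff₀ hξ, one_mul]
    exact le_invMillsRatio hξ
  · rw [div_le_iff₀ hξ]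
    refine (invMillsRatio_le hξ).trans_eq ?_
    field_simp

section
variable {k x u : ℝ}

lemma hardEdgeIntegrand_nonneg (hk : 0 ≤ k) : 0 ≤ hardEdgeIntegrand k x u :=
  mul_nonneg (inv_nonneg.2 hk) (div_nonneg (exp_pos _).le (gaussTail_pos _).le)

lemma measurable_hardEdgeIntegrand : Measurable (hardEdgeIntegrand k x) := by
  unfold hardEdgeIntegrand
  have := measurable_gaussTail
  fun_prop

lemma hardEdgeIntegrand_eq (hk : k ≠ 0) :
    hardEdgeIntegrand k x u = k⁻¹ * exp (2 * x * u - 2 * (x / k) ^ 2) * invMillsRatio (k * u) := by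
  have hsq : -(2 * (x / k) - k * u) ^ 2 / 2 = (2 * x * u - 2 * (x / k) ^ 2) + -(k * u) ^ 2 / 2 := by
    field_simp
    ring
  rw [hardEdgeIntegrand, invMillsRatio, hsq, exp_add]
  ring

lemma hardEdgeIntegrand_le_of_nonpos (hk : 0 ≤ k) (hu : u ≤ 0) :
    hardEdgeIntegrand k x u ≤ k⁻¹ / gaussTail 0 := by
  have hE : gaussTail 0 ≤ gaussTail (k * u) :=
    gaussTail_antitone (mul_nonpos_of_nonneg_of_nonpos hk hu)
  have hexp := exp_neg_sq_div_two_le_one (2 * (x / k) - k * u)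
  have hE0 := gaussTail_pos 0
  rw [hardEdgeIntegrand, div_eq_mul_one_div k⁻¹]
  gcongr

lemma hardEdgeIntegrand_le (hx : x ≤ 0) (hk : 1 ≤ k) :
    hardEdgeIntegrand k x u ≤ max (gaussTail 1)⁻¹ (2 * u) := by
  have hk0 : 0 < k := one_pos.trans_le hk
  rcases le_or_gt (k * u) 1 with hku | hku
  · have hE : gaussTail 1 ≤ gaussTail (k * u) := gaussTail_antitone hku
    have hexp := exp_neg_sq_div_two_le_one (2 * (x / k) - k * u)
    have hE1 := gaussTail_pos 1
    have hk1 := inv_le_one_of_one_le₀ hk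
    have hratio : 0 ≤ exp (-(2 * (x / k) - k * u) ^ 2 / 2) / gaussTail (k * u) :=
      div_nonneg (exp_pos _).le (gaussTail_pos _).le
    refine le_max_of_le_left ?_
    calc hardEdgeIntegrand k x u ≤ 1 * (1 / gaussTail 1) := by
          rw [hardEdgeIntegrand]
          gcongr
      _ = (gaussTail 1)⁻¹ := by ring
  · have hu : 0 < u := pos_of_mul_pos_right (one_pos.trans hku) hk0.le
    have hexp : exp (2 * x * u - 2 * (x / k) ^ 2) ≤ 1 :=
      exp_le_one_iff.2 (by nlinarith [mul_nonpos_of_nonpos_of_nonneg hx hu.le, sq_nonneg (x / k)])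
    have hr := invMillsRatio_le (one_pos.trans hku)
    have hr0 := le_invMillsRatio (one_pos.trans hku)
    have hinv : (k * u)⁻¹ ≤ k * u := (inv_lt_one_of_one_lt₀ hku).le.trans hku.le
    refine le_max_of_le_right ?_
    calc hardEdgeIntegrand k x u ≤ k⁻¹ * 1 * (k * u + k * u) := by
          rw [hardEdgeIntegrand_eq hk0.ne']
          gcongr <;> linarith
      _ = 2 * u := by field_simp; ring

lemma tendsto_hardEdgeIntegrand_of_pos (hu : 0 < u) :
    Tendsto (fun k => hardEdgeIntegrand k x u) atTop (𝓝 (u * exp (2 * x * u))) := by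
  have hmills := tendsto_invMillsRatio_div_atTop.comp (tendsto_id.atTop_mul_const hu)
  have hxk : Tendsto (fun k : ℝ => x / k) atTop (𝓝 0) := tendsto_const_nhds.div_atTop tendsto_id
  have hexp := (continuous_exp.tendsto _).comp
    ((tendsto_const_nhds (x := 2 * x * u)).sub ((hxk.pow 2).const_mul 2))
  have hlim := (hexp.const_mul u).mul hmills
  simp only [Function.comp_def, id, zero_pow two_ne_zero, mul_zero, sub_zero, mul_one] at hlim
  refine hlim.congr' ?_
  filter_upwards [eventually_gt_atTop 0] with k hk
  rw [hardEdgeIntegrand_eq hk.ne']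
  field_simp

lemma tendsto_hardEdgeIntegrand_of_nonpos (hu : u ≤ 0) :
    Tendsto (fun k => hardEdgeIntegrand k x u) atTop (𝓝 0) := by
  have hupper : Tendsto (fun k : ℝ => k⁻¹ / gaussTail 0) atTop (𝓝 0) := by
    simpa using tendsto_inv_atTop_zero.div_const (gaussTail 0)
  refine tendsto_of_tendsto_of_tendsto_of_le_of_le' tendsto_const_nhds hupper ?_ ?_ <;>
    filter_upwards [eventually_ge_atTop 0] with k hk
  exacts [hardEdgeIntegrand_nonneg hk, hardEdgeIntegrand_le_of_nonpos hk hu]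
end

section
variable {ι : Type*} {l : Filter ι} {k a b : ι → ℝ} {x A B : ℝ}

lemma tendsto_indicator_Ioc_hardEdgeIntegrand (hk : Tendsto k l atTop) (ha : Tendsto a l (𝓝 A))
    (hA : A ≤ 0) (hb : Tendsto b l (𝓝 B)) {u : ℝ} (hu : u ≠ 0) (huB : u ≠ B) :
    Tendsto (fun i => (Ioc (a i) (b i)).indicator (hardEdgeIntegrand (k i) x) u) l
      (𝓝 ((Ioc 0 B).indicator (fun u => u * exp (2 * x * u)) u)) := by
  rcases hu.lt_or_gt with hneg | hpos
  · rw [indicator_of_notMem fun h => hneg.not_gt h.1]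
    refine tendsto_of_tendsto_of_tendsto_of_le_of_le' tendsto_const_nhds
      ((tendsto_hardEdgeIntegrand_of_nonpos (x := x) hneg.le).comp hk) ?_ ?_ <;>
      filter_upwards [hk.eventually_ge_atTop 0] with i hki
    · exact indicator_nonneg (fun _ _ => hardEdgeIntegrand_nonneg hki) u
    · exact indicator_le_self' (fun _ _ => hardEdgeIntegrand_nonneg hki) u
  rcases huB.lt_or_gt with hlt | hgt
  · rw [indicator_of_mem (mem_Ioc.2 ⟨hpos, hlt.le⟩)]
    refine ((tendsto_hardEdgeIntegrand_of_pos hpos).comp hk).congr' ?_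
    filter_upwards [ha.eventually (eventually_lt_nhds (hA.trans_lt hpos)),
      hb.eventually (eventually_gt_nhds hlt)] with i hai hbi
    exact (indicator_of_mem (mem_Ioc.2 ⟨hai, hbi.le⟩) _).symm
  · rw [indicator_of_notMem fun h => hgt.not_ge h.2]
    refine tendsto_const_nhds.congr' ?_
    filter_upwards [hb.eventually (eventually_lt_nhds hgt)] with i hbi
    exact (indicator_of_notMem (fun h => hbi.not_ge h.2) _).symm

theorem tendsto_setIntegral_Ioc_hardEdgeIntegrand [l.IsCountablyGenerated] (hx : x ≤ 0)
    (hk : Tendsto k l atTop) (ha : Tendsto a l (𝓝 A)) (hA : A ≤ 0) (hb : Tendsto b l (𝓝 B)) :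
    Tendsto (fun i => ∫ u in Ioc (a i) (b i), hardEdgeIntegrand (k i) x u) l
      (𝓝 (∫ u in Ioc 0 B, u * exp (2 * x * u))) := by
  set C := max (gaussTail 1)⁻¹ (2 * (B + 1))
  have hC : 0 ≤ C := (inv_pos.2 (gaussTail_pos 1)).le.trans (le_max_left _ _)
  simp only [← integral_indicator measurableSet_Ioc]
  refine tendsto_integral_filter_of_dominated_convergence
    ((Icc (A - 1) (B + 1)).indicator fun _ => C)
    (.of_forall fun _ =>
      (measurable_hardEdgeIntegrand.indicator measurableSet_Ioc).aestronglyMeasurable)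
    ?_ ((integrableOn_const measure_Icc_lt_top.ne).integrable_indicator measurableSet_Icc) ?_
  · filter_upwards [hk.eventually_ge_atTop 1, ha.eventually (eventually_gt_nhds (sub_one_lt A)),
      hb.eventually (eventually_lt_nhds (lt_add_one B))] with i hki hai hbi
    refine .of_forall fun u => ?_
    by_cases hu : u ∈ Ioc (a i) (b i)
    · rw [indicator_of_mem hu,
        indicator_of_mem (mem_Icc.2 ⟨by linarith [hu.1], by linarith [hu.2]⟩),
        norm_of_nonneg (hardEdgeIntegrand_nonneg (zero_le_one.trans hki))]
      exact (hardEdgeIntegrand_le hx hki).trans (max_le_max le_rfl (by linarith [hu.2]))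
    · rw [indicator_of_notMem hu, norm_zero]
      exact indicator_nonneg (fun _ _ => hC) u
  · filter_upwards [volume.ae_ne 0, volume.ae_ne B] with u hu huB
    exact tendsto_indicator_Ioc_hardEdgeIntegrand hk ha hA hb hu huB
end

section
variable {τ ρ : ℝ}

lemma cOf_pos (hτ : τ < 1) : 0 < cOf τ ρ :=
  inv_pos.2 (add_pos_of_nonneg_of_pos (sqrt_nonneg _) (by linarith))

lemma tendsto_cOf (hτ : τ < 1) : Tendsto (cOf τ) atTop (𝓝 (1 - τ)⁻¹) := by
  have hsq : Tendsto (fun ρ : ℝ => (1 - τ) ^ 2 / 4 + 1 / ρ ^ 2) atTop (𝓝 ((1 - τ) ^ 2 / 4 + 0)) :=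
    tendsto_const_nhds.add (tendsto_const_nhds.div_atTop (tendsto_pow_atTop two_ne_zero))
  have hden := hsq.sqrt.add_const ((1 - τ) / 2)
  have hval : √((1 - τ) ^ 2 / 4 + 0) + (1 - τ) / 2 = 1 - τ := by
    rw [add_zero, show (1 - τ) ^ 2 / 4 = ((1 - τ) / 2) ^ 2 by ring, sqrt_sq (by linarith),
      add_halves]
  rw [hval] at hden
  exact hden.inv₀ (sub_ne_zero.2 hτ.ne')

lemma tendsto_div_cOf_atTop (hτ : τ < 1) : Tendsto (fun ρ => ρ / cOf τ ρ) atTop atTop := by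
  have := (tendsto_cOf hτ).inv₀ (inv_ne_zero (sub_ne_zero.2 hτ.ne'))
  rw [inv_inv] at this
  simpa [div_eq_mul_inv] using tendsto_id.atTop_mul_pos (sub_pos.2 hτ) this

lemma Rtilde_eq_setIntegral (hτ : τ < 1) (hρ : 0 < ρ) (z : ℂ) :
    Rtilde τ ρ z = ∫ u in Ioc (-(τ * cOf τ ρ)) ((1 - τ) * cOf τ ρ),
      hardEdgeIntegrand (ρ / cOf τ ρ) z.re u := by
  have hc := cOf_pos (ρ := ρ) hτ
  set c := cOf τ ρ
  set k := ρ / c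
  have hk : 0 < k := div_pos hρ hc
  have hck : c / ρ = k⁻¹ := (inv_div ρ c).symm
  have hbounds : -(ρ * τ) = k * -(τ * c) ∧ ρ * (1 - τ) = k * ((1 - τ) * c) := by
    constructor <;> simp only [k] <;> field_simp
  rw [Rtilde, Rlim1, Complex.re_ofReal_mul, hck, hbounds.1, hbounds.2]
  simp_rw [setIntegral_Iio_exp_neg_sub_sq]
  rw [← intervalIntegral.smul_integral_comp_mul_left, intervalIntegral.integral_of_le
    (by nlinarith), smul_eq_mul, ← mul_assoc, ← integral_const_mul]
  refine setIntegral_congr_fun measurableSet_Ioc fun u _ => ?_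
  rw [hardEdgeIntegrand, div_eq_inv_mul z.re k, sq, mul_assoc k⁻¹, inv_mul_cancel₀ hk.ne',
    mul_one]
end

/-- **Corollary (hard edge limit `ρ → ∞`, case `τ ∈ (0,1)`).** For fixed `τ ∈ (0,1)` and
`x ≤ 0`, for every `z ∈ ℂ` with `Re z = x` one has
`lim_{ρ→∞} R̃^τ_ρ(z) = ∫_0^1 ξ e^{2xξ} dξ`. -/
theorem one_sided_hard_edge_large_rho_limit
    (τ x : ℝ) (hτ : τ ∈ Set.Ioo (0:ℝ) 1) (hx : x ≤ 0) :
    ∀ z : ℂ, z.re = x →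
      Tendsto (fun ρ : ℝ => Rtilde τ ρ z) atTop
        (nhds (∫ ξ in (0:ℝ)..1, ξ * Real.exp (2 * x * ξ))) := by
  rintro z rfl
  have hc := tendsto_cOf hτ.2
  have hlim := tendsto_setIntegral_Ioc_hardEdgeIntegrand hx (tendsto_div_cOf_atTop hτ.2)
    (hc.const_mul τ).neg (neg_nonpos.2 (mul_nonneg hτ.1.le (inv_nonneg.2 (sub_nonneg.2 hτ.2.le))))
    (hc.const_mul (1 - τ))
  rw [mul_inv_cancel₀ (sub_ne_zero.2 hτ.2.ne')] at hlim
  rw [intervalIntegral.integral_of_le zero_le_one]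
  refine hlim.congr' ?_
  filter_upwards [eventually_gt_atTop 0] with ρ hρ
  exact (Rtilde_eq_setIntegral hτ.2 hρ z).symm
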